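/- Weakest precondition characterization of the before-after relation: for any substitution S, state s and postcondition P, wp S P s holds if and only if every s' with Prd S s s' satisfies P s' (wp is the demonic predicate transformer of the relation Prd), assuming classical logic. -/
import Mathlib


inductive Subst (σ : Type) : Type 1 where
  | assign (f : σ → σ) : Subst σ
  | skip : Subst σ
  | guard (P : σ → Prop) (S : Subst σ) : Subst σ
  | choice (S₁ S₂ : Subst σ) : Subst σ
  | anyVar {α : Type} (S : α → Subst σ) : Subst σ

def wp {σ : Type} : Subst σ → (σ → Prop) → σ → Prop
  | .assign f, P, s => P (f s)
  | .skip, P, s => P s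
  | .guard Q S, P, s => Q s → wp S P s
  | .choice S₁ S₂, P, s => wp S₁ P s ∧ wp S₂ P s
  | .anyVar S, P, s => ∀ a, wp (S a) P s

def Prd {σ : Type} (S : Subst σ) (s s' : σ) : Prop :=
  ¬ wp S (fun t => ¬ (t = s')) s

def PrdR {σ : Type} : Subst σ → σ → σ → Prop
  | .assign f, s, s' => s' = f s
  | .skip, s, s' => s' = s
  | .guard Q S, s, s' => Q s ∧ PrdR S s s'
  | .choice S₁ S₂, s, s' => PrdR S₁ s s' ∨ PrdR S₂ s s'
  | .anyVar S, s, s' => ∃ a, PrdR (S a) s s'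

theorem stmt17 {σ : Type} (S : Subst σ) (P : σ → Prop) (s : σ) :
    wp S P s ↔ ∀ s', PrdR S s s' → P s' := by
  induction S generalizing s with
  | assign f => simp [wp, PrdR]
  | skip => simp [wp, PrdR]
  | guard Q S ih =>
    simp only [wp, PrdR]
    constructor
    · intro h s' ⟨hq, hp⟩
      exact (ih s).mp (h hq) s' hp
    · intro h hq
      exact (ih s).mpr fun s' hp => h s' ⟨hq, hp⟩
  | choice S₁ S₂ ih₁ ih₂ =>
    simp only [wp, PrdR, ih₁, ih₂]
    constructor
    · rintro ⟨h1, h2⟩ s' (h | h)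
      exacts [h1 s' h, h2 s' h]
    · intro h
      exact ⟨fun s' hp => h s' (.inl hp), fun s' hp => h s' (.inr hp)⟩
  | anyVar S ih =>
    simp only [wp, PrdR, fun a => ih a]
    constructor
    · rintro h s' ⟨a, hp⟩
      exact h a s' hp
    · intro h a s' hp
      exact h s' ⟨a, hp⟩
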